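/- The sequence a(n) = Σ_{k=0}^{n} C(n,k) C(2k,k) C(2n−2k,n−k) satisfies the recurrence (n+1)^2 a(n+1) = (12n^2+12n+4) a(n) − 32 n^2 a(n-1) for all n ≥ 1, with a(0)=1, a(1)=4. -/

import Mathlib

/-!
Creative telescoping. Write `T n k` for the summand. Its shift quotients in `n` and in `k` are
rational functions, and read downwards they express `T n k`, `T (n + 1) k` and `T (n + 2) (k + 1)`
as multiples of `T (n + 2) k` whose denominators, `2 (n + 1) (2n + 1 - 2k)`,
`2 (n + 2) (2n + 3 - 2k)` and `(k + 1)² (2n + 3 - 2k)`, never vanish because `2n + 1 - 2k` and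
`2n + 3 - 2k` are odd. So the recurrence operator applied to `T · k` equals `G n (k + 1) - G n k`
for a certificate `G n k = R n k · T (n + 2) k` with `R` rational (found by Zeilberger's algorithm),
at every `k`, boundary included, and summing over `k ≤ n + 2` telescopes to
`G n (n + 3) - G n 0 = 0`.
-/

open Finset Nat

def zagierTerm (n k : ℕ) : ℚ := n.choose k * centralBinom k * centralBinom (n - k)

def zagierSeq (n : ℕ) : ℚ := ∑ k ∈ range (n + 1), zagierTerm n k

lemma zagierTerm_eq_zero_of_lt {n k : ℕ} (h : n < k) : zagierTerm n k = 0 := by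
  simp [zagierTerm, choose_eq_zero_of_lt h]

lemma zagierSeq_eq_sum_range {n N : ℕ} (h : n < N) :
    zagierSeq n = ∑ k ∈ range N, zagierTerm n k := by
  refine sum_subset (range_subset_range.2 h) fun k hkN hkn => zagierTerm_eq_zero_of_lt ?_
  simp only [mem_range] at hkN hkn
  omega

section CastChoose

variable {R : Type*} [CommRing R]

lemma cast_choose_succ_mul_sub (n k : ℕ) :
    ((n + 1).choose k : R) * ((n : R) + 1 - k) = n.choose k * ((n : R) + 1) := by
  rcases le_or_gt k (n + 1) with hk | hk
  · have h := congrArg (Nat.cast (R := R)) (choose_mul_succ_eq n k)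
    push_cast [hk] at h
    exact h.symm
  · simp [choose_eq_zero_of_lt hk, choose_eq_zero_of_lt (by omega : n < k)]

lemma cast_choose_succ_right_mul (n k : ℕ) :
    (n.choose (k + 1) : R) * ((k : R) + 1) = n.choose k * ((n : R) - k) := by
  rcases le_or_gt k n with hk | hk
  · have h := congrArg (Nat.cast (R := R)) (choose_succ_right_eq n k)
    push_cast [hk] at h
    exact h
  · simp [choose_eq_zero_of_lt hk, choose_eq_zero_of_lt (by omega : n < k + 1)]

lemma cast_succ_mul_centralBinom_succ (m : ℕ) :
    ((m : R) + 1) * centralBinom (m + 1) = 2 * (2 * m + 1) * centralBinom m := by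
  have h := congrArg (Nat.cast (R := R)) (succ_mul_centralBinom_succ m)
  push_cast at h
  exact h

end CastChoose

lemma zagierTerm_succ_left (n k : ℕ) :
    zagierTerm (n + 1) k * ((n : ℚ) + 1 - k) ^ 2
      = 2 * ((n : ℚ) + 1) * (2 * n + 1 - 2 * k) * zagierTerm n k := by
  rcases le_or_gt k n with hk | hk
  · obtain ⟨m, rfl⟩ := Nat.exists_eq_add_of_le hk
    have hchoose := cast_choose_succ_mul_sub (R := ℚ) (k + m) k
    have hcentral := cast_succ_mul_centralBinom_succ (R := ℚ) m
    simp only [zagierTerm, show k + m + 1 - k = m + 1 by omega, show k + m - k = m by omega]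
    push_cast at hchoose ⊢
    linear_combination (centralBinom k * (((m : ℚ) + 1) * centralBinom (m + 1))) * hchoose
      + (centralBinom k * ((k + m).choose k : ℚ) * ((k : ℚ) + m + 1)) * hcentral
  · have hchoose := cast_choose_succ_mul_sub (R := ℚ) n k
    rw [choose_eq_zero_of_lt hk, Nat.cast_zero, zero_mul] at hchoose
    rw [zagierTerm_eq_zero_of_lt hk, zagierTerm]
    linear_combination
      (centralBinom k * centralBinom (n + 1 - k) * ((n : ℚ) + 1 - k)) * hchoose

lemma zagierTerm_succ_right (n k : ℕ) :
    zagierTerm n (k + 1) * ((k : ℚ) + 1) ^ 2 * (2 * n - 2 * k - 1)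
      = ((n : ℚ) - k) ^ 2 * (2 * k + 1) * zagierTerm n k := by
  rcases lt_or_ge k n with hk | hk
  · obtain ⟨m, rfl⟩ := Nat.exists_eq_add_of_lt hk
    have hchoose := cast_choose_succ_right_mul (R := ℚ) (k + m + 1) k
    have hk' := cast_succ_mul_centralBinom_succ (R := ℚ) k
    have hm' := cast_succ_mul_centralBinom_succ (R := ℚ) m
    simp only [zagierTerm, show k + m + 1 - (k + 1) = m by omega,
      show k + m + 1 - k = m + 1 by omega]
    push_cast at hchoose ⊢
    linear_combination
      (((k : ℚ) + 1) * centralBinom (k + 1) * centralBinom m * (2 * m + 1)) * hchoose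
      + (((k + m + 1).choose k : ℚ) * ((m : ℚ) + 1) * centralBinom m * (2 * m + 1)) * hk'
      - (((k + m + 1).choose k : ℚ) * ((m : ℚ) + 1) * (2 * k + 1) * centralBinom k) * hm'
  · have hchoose := cast_choose_succ_right_mul (R := ℚ) n k
    rw [choose_eq_zero_of_lt (by omega : n < k + 1), Nat.cast_zero, zero_mul] at hchoose
    rw [zagierTerm, zagierTerm, choose_eq_zero_of_lt (by omega : n < k + 1)]
    linear_combination
      (((n : ℚ) - k) * (2 * k + 1) * centralBinom k * centralBinom (n - k)) * hchoose

def zagierCertificate (n k : ℕ) : ℚ :=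
  (k : ℚ) ^ 2 * (2 * (n + 1) * k - (2 * n + 1) * (n + 2)) / ((n + 2) * (2 * n + 3 - 2 * k))
    * zagierTerm (n + 2) k

lemma cast_two_mul_add_one_ne_zero {R : Type*} [Ring R] [CharZero R] (j : ℤ) :
    (2 * j + 1 : R) ≠ 0 := by
  exact_mod_cast (by omega : 2 * j + 1 ≠ 0)

lemma zagierTerm_creative_telescoping (n k : ℕ) :
    ((n : ℚ) + 2) ^ 2 * zagierTerm (n + 2) k
      - (12 * ((n : ℚ) + 1) ^ 2 + 12 * (n + 1) + 4) * zagierTerm (n + 1) k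
      + 32 * ((n : ℚ) + 1) ^ 2 * zagierTerm n k
      = zagierCertificate n (k + 1) - zagierCertificate n k := by
  have hodd₃ : (2 * n + 3 - 2 * k : ℚ) ≠ 0 := by
    convert cast_two_mul_add_one_ne_zero (R := ℚ) (n - k + 1) using 1; push_cast; ring
  have hodd₁ : (2 * n + 1 - 2 * k : ℚ) ≠ 0 := by
    convert cast_two_mul_add_one_ne_zero (R := ℚ) (n - k) using 1; push_cast; ring
  have h₀ : zagierTerm n k
      = zagierTerm (n + 1) k * ((n : ℚ) + 1 - k) ^ 2 / (2 * (n + 1) * (2 * n + 1 - 2 * k)) := by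
    rw [eq_div_iff (by positivity)]
    linear_combination -(zagierTerm_succ_left n k)
  have h₁ : zagierTerm (n + 1) k
      = zagierTerm (n + 2) k * ((n : ℚ) + 2 - k) ^ 2 / (2 * (n + 2) * (2 * n + 3 - 2 * k)) := by
    rw [eq_div_iff (by positivity)]
    have h := zagierTerm_succ_left (n + 1) k
    push_cast at h
    linear_combination -h
  have h₃ : zagierTerm (n + 2) (k + 1)
      = zagierTerm (n + 2) k * ((n : ℚ) + 2 - k) ^ 2 * (2 * k + 1)
        / ((k + 1) ^ 2 * (2 * n + 3 - 2 * k)) := by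
    rw [eq_div_iff (by positivity)]
    have h := zagierTerm_succ_right (n + 2) k
    push_cast at h
    linear_combination h
  rw [zagierCertificate, zagierCertificate, h₀, h₁, h₃]
  push_cast
  rw [show (2 * n + 3 - 2 * (k + 1) : ℚ) = 2 * n + 1 - 2 * k by ring]
  -- `field_simp` normalises `2 * n` to `n * 2` and then no longer sees `hodd₁`, `hodd₃`
  generalize hd₃ : (2 * n + 3 - 2 * k : ℚ) = d₃ at *
  generalize hd₁ : (2 * n + 1 - 2 * k : ℚ) = d₁ at *
  field_simp
  subst hd₃ hd₁
  ring

lemma zagierSeq_recurrence (n : ℕ) :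
    ((n : ℚ) + 2) ^ 2 * zagierSeq (n + 2)
      - (12 * ((n : ℚ) + 1) ^ 2 + 12 * (n + 1) + 4) * zagierSeq (n + 1)
      + 32 * ((n : ℚ) + 1) ^ 2 * zagierSeq n = 0 := by
  rw [zagierSeq_eq_sum_range (N := n + 3) (by omega),
    zagierSeq_eq_sum_range (N := n + 3) (by omega), zagierSeq_eq_sum_range (N := n + 3) (by omega),
    mul_sum, mul_sum, mul_sum, ← sum_sub_distrib, ← sum_add_distrib]
  simp only [zagierTerm_creative_telescoping]
  rw [sum_range_sub]
  simp [zagierCertificate, zagierTerm_eq_zero_of_lt (by omega : n + 2 < n + 3)]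

/-- The sequence `a n = ∑ k, (n.choose k) * ((2k).choose k) * ((2n-2k).choose (n-k))`
satisfies the recurrence `(n+1)² a(n+1) = (12n²+12n+4) a(n) − 32 n² a(n-1)` for all
`n ≥ 1`, with `a 0 = 1` and `a 1 = 4`. -/
theorem zagier_d_recurrence (a : ℕ → ℤ)
    (ha : ∀ n, a n = ∑ k ∈ Finset.range (n + 1),
      (Nat.choose n k : ℤ) * (Nat.choose (2 * k) k : ℤ)
        * (Nat.choose (2 * n - 2 * k) (n - k) : ℤ)) :
    a 0 = 1 ∧ a 1 = 4 ∧
      ∀ n : ℕ, 1 ≤ n →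
        ((n : ℤ) + 1) ^ 2 * a (n + 1)
          = (12 * (n : ℤ) ^ 2 + 12 * n + 4) * a n - 32 * (n : ℤ) ^ 2 * a (n - 1) := by
  have ha_cast : ∀ n, (a n : ℚ) = zagierSeq n := by
    intro n
    simp only [ha, zagierSeq, zagierTerm, centralBinom_eq_two_mul_choose, ← Nat.mul_sub]
    push_cast
    rfl
  refine ⟨by simp [ha], by simp [ha, sum_range_succ], fun n hn => ?_⟩
  obtain ⟨n, rfl⟩ : ∃ m, n = m + 1 := ⟨n - 1, by omega⟩
  have h := zagierSeq_recurrence n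
  rw [← ha_cast, ← ha_cast, ← ha_cast] at h
  qify
  rw [Nat.add_sub_cancel]
  linear_combination h
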